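/- arXiv:2203.07924 — 2 statements merged into one kernel-verified Lean document; each statement's English description precedes it below -/
import Mathlib

section
/- Let (X, μ) be a probability space, Φ : ℝ → ℝ a convex differentiable function, and f : X → ℝ integrable with Φ∘f integrable. Then Ent_μ^Φ(f) = inf over z in ℝ of ∫ (Φ(f) − Φ(z) − Φ'(z)(f − z)) dμ, with the infimum attained at z = ∫ f dμ. -/
open MeasureTheory

lemma tangent_le {Φ : ℝ → ℝ} (hΦ : ConvexOn ℝ Set.univ Φ) (hΦd : Differentiable ℝ Φ)
    (z y : ℝ) : Φ z + deriv Φ z * (y - z) ≤ Φ y := by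
  rcases lt_trichotomy z y with h | rfl | h
  · have := hΦ.deriv_le_slope (Set.mem_univ z) (Set.mem_univ y) h (hΦd z)
    rw [slope_def_field] at this
    have hz : (0:ℝ) < y - z := by linarith
    rw [le_div_iff₀ hz] at this
    linarith
  · simp
  · have := hΦ.slope_le_deriv (Set.mem_univ y) (Set.mem_univ z) h (hΦd z)
    rw [slope_def_field] at this
    have hz : (0:ℝ) < z - y := by linarith
    have : (Φ z - Φ y) ≤ deriv Φ z * (z - y) := by
      rw [div_le_iff₀ hz] at this; linarith
    linarith

theorem phi_entropy_variational {X : Type*} [MeasurableSpace X] (μ : Measure X)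
    [IsProbabilityMeasure μ]
    (Φ : ℝ → ℝ) (hΦ : ConvexOn ℝ Set.univ Φ) (hΦd : Differentiable ℝ Φ)
    (f : X → ℝ) (hf : Integrable f μ) (hΦf : Integrable (fun x => Φ (f x)) μ) :
    IsLeast (Set.range fun z : ℝ => ∫ x, (Φ (f x) - Φ z - deriv Φ z * (f x - z)) ∂μ)
      (∫ x, Φ (f x) ∂μ - Φ (∫ x, f x ∂μ)) ∧
    (∫ x, (Φ (f x) - Φ (∫ y, f y ∂μ) - deriv Φ (∫ y, f y ∂μ) * (f x - ∫ y, f y ∂μ)) ∂μ)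
      = ∫ x, Φ (f x) ∂μ - Φ (∫ x, f x ∂μ) := by
  set m := ∫ x, f x ∂μ with hm
  have key : ∀ z : ℝ, (∫ x, (Φ (f x) - Φ z - deriv Φ z * (f x - z)) ∂μ)
      = ∫ x, Φ (f x) ∂μ - Φ z - deriv Φ z * (m - z) := by
    intro z
    have hsub : Integrable (fun x => f x - z) μ := hf.sub (integrable_const z)
    have hmul : Integrable (fun x => deriv Φ z * (f x - z)) μ := hsub.const_mul _
    have h1 : Integrable (fun x => Φ z + deriv Φ z * (f x - z)) μ :=
      (integrable_const _).add hmul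
    have heq : (fun x => Φ (f x) - Φ z - deriv Φ z * (f x - z))
        = fun x => Φ (f x) - (Φ z + deriv Φ z * (f x - z)) := by
      funext x; ring
    have h2 : ∫ x, (Φ z + deriv Φ z * (f x - z)) ∂μ = Φ z + deriv Φ z * (m - z) := by
      rw [integral_add (integrable_const _) hmul, MeasureTheory.integral_const_mul,
        integral_sub hf (integrable_const z), integral_const, integral_const]
      simp [hm]
    rw [heq, integral_sub hΦf h1, h2]
    ring
  have key_m : (∫ x, (Φ (f x) - Φ m - deriv Φ m * (f x - m)) ∂μ)
      = ∫ x, Φ (f x) ∂μ - Φ m := by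
    rw [key m]; ring
  refine ⟨⟨⟨m, key_m⟩, ?_⟩, key_m⟩
  rintro v ⟨z, rfl⟩
  dsimp only
  rw [key z]
  have := tangent_le hΦ hΦd z m
  linarith
end

section
/- Let X be a measurable space, Q a probability measure on X, and a : X → (0,∞) a measurable function with inf a > 0 such that π := (1/a)·Q is also a probability measure (i.e. ∫ (1/a) dQ = 1). Then for any convex differentiable Φ : ℝ → ℝ and any f with Φ∘f integrable against both π and Q, one has Ent_π^Φ(f) ≤ (1/inf a) · Ent_Q^Φ(f). -/
open MeasureTheory

theorem phi_entropy_perturbation {X : Type*} [MeasurableSpace X] [Nonempty X]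
    (Q : Measure X) [IsProbabilityMeasure Q]
    (a : X → ℝ) (ha : Measurable a)
    (m : ℝ) (hminf : m = ⨅ x, a x) (hm : 0 < m)
    (π : Measure X) (hπ : π = Q.withDensity fun x => ENNReal.ofReal (a x)⁻¹)
    (hπprob : IsProbabilityMeasure π)
    (Φ : ℝ → ℝ) (hΦ : ConvexOn ℝ Set.univ Φ) (hΦd : Differentiable ℝ Φ)
    (f : X → ℝ) (hfπ : Integrable f π) (hfQ : Integrable f Q)
    (hΦfπ : Integrable (fun x => Φ (f x)) π) (hΦfQ : Integrable (fun x => Φ (f x)) Q) :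
    ∫ x, Φ (f x) ∂π - Φ (∫ x, f x ∂π)
      ≤ (1 / m) * (∫ x, Φ (f x) ∂Q - Φ (∫ x, f x ∂Q)) := by
  -- lower bound m ≤ a x
  have hbdd : BddBelow (Set.range a) := by
    by_contra h
    rw [hminf, Real.iInf_of_not_bddBelow h] at hm
    exact lt_irrefl 0 hm
  have hma : ∀ x, m ≤ a x := fun x => hminf ▸ ciInf_le hbdd x
  have hapos : ∀ x, 0 < a x := fun x => lt_of_lt_of_le hm (hma x)
  set z : ℝ := ∫ x, f x ∂Q with hz
  set c : ℝ := deriv Φ z with hc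
  set g : X → ℝ := fun x => Φ (f x) - Φ z - c * (f x - z) with hg
  have hg0 : ∀ x, 0 ≤ g x := fun x => by
    have := tangent_le hΦ hΦd z (f x); simp only [hg]; linarith
  -- integrability of g
  have hgπ : Integrable g π := by
    apply Integrable.sub (hΦfπ.sub (integrable_const _))
    exact (hfπ.sub (integrable_const _)).const_mul c
  have hgQ : Integrable g Q := by
    apply Integrable.sub (hΦfQ.sub (integrable_const _))
    exact (hfQ.sub (integrable_const _)).const_mul c
  -- density as ℝ≥0
  set w : X → NNReal := fun x => Real.toNNReal (a x)⁻¹ with hw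
  have hwmeas : Measurable w := ha.inv.real_toNNReal
  have hπw : π = Q.withDensity fun x => ((w x : NNReal) : ENNReal) := by
    rw [hπ]; rfl
  have hwcoe : ∀ x, (w x : ℝ) = (a x)⁻¹ := fun x =>
    Real.coe_toNNReal _ (le_of_lt (inv_pos.2 (hapos x)))
  -- ∫ g dπ = ∫ (a x)⁻¹ * g x dQ
  have key : ∫ x, g x ∂π = ∫ x, (a x)⁻¹ * g x ∂Q := by
    rw [hπw, integral_withDensity_eq_integral_smul hwmeas]
    exact integral_congr_ae (Filter.Eventually.of_forall fun x => by
      simp [NNReal.smul_def, hwcoe x])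
  have hgQπ : Integrable (fun x => (a x)⁻¹ * g x) Q := by
    have h1 : Integrable (fun x => w x • g x) Q :=
      (integrable_withDensity_iff_integrable_smul hwmeas).1 (hπw ▸ hgπ)
    exact h1.congr (Filter.Eventually.of_forall fun x => by simp [NNReal.smul_def, hwcoe x])
  -- pointwise bound
  have hpt : ∀ x, (a x)⁻¹ * g x ≤ m⁻¹ * g x := fun x =>
    mul_le_mul_of_nonneg_right
      (inv_anti₀ hm (hma x)) (hg0 x)
  have hint2 : Integrable (fun x => m⁻¹ * g x) Q := hgQ.const_mul _
  have step1 : ∫ x, g x ∂π ≤ m⁻¹ * ∫ x, g x ∂Q := by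
    rw [key, ← integral_const_mul]
    exact integral_mono hgQπ hint2 hpt
  -- compute ∫ g dπ
  have hπint : ∫ x, g x ∂π = ∫ x, Φ (f x) ∂π - Φ z - c * (∫ x, f x ∂π - z) := by
    have A : Integrable (fun x => Φ (f x) - Φ z) π := hΦfπ.sub (integrable_const _)
    have B : Integrable (fun x => c * (f x - z)) π := (hfπ.sub (integrable_const _)).const_mul c
    rw [hg]
    rw [integral_sub A B, integral_sub hΦfπ (integrable_const _), integral_const_mul,
      integral_sub hfπ (integrable_const _)]
    simp
  have hQint : ∫ x, g x ∂Q = ∫ x, Φ (f x) ∂Q - Φ z := by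
    have A : Integrable (fun x => Φ (f x) - Φ z) Q := hΦfQ.sub (integrable_const _)
    have B : Integrable (fun x => c * (f x - z)) Q := (hfQ.sub (integrable_const _)).const_mul c
    rw [hg]
    rw [integral_sub A B, integral_sub hΦfQ (integrable_const _), integral_const_mul,
      integral_sub hfQ (integrable_const _)]
    simp [← hz]
  have hπtan : ∫ x, Φ (f x) ∂π - Φ (∫ x, f x ∂π) ≤ ∫ x, g x ∂π := by
    rw [hπint]
    have h := tangent_le hΦ hΦd z (∫ x, f x ∂π)
    rw [← hc] at h
    clear_value z c
    linarith
  have hminv : (0:ℝ) ≤ m⁻¹ := le_of_lt (inv_pos.2 hm)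
  calc ∫ x, Φ (f x) ∂π - Φ (∫ x, f x ∂π) ≤ ∫ x, g x ∂π := hπtan
    _ ≤ m⁻¹ * ∫ x, g x ∂Q := step1
    _ = m⁻¹ * (∫ x, Φ (f x) ∂Q - Φ (∫ x, f x ∂Q)) := by rw [hQint, hz]
    _ = (1 / m) * (∫ x, Φ (f x) ∂Q - Φ (∫ x, f x ∂Q)) := by rw [one_div]
end
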